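/- arXiv:1709.03705 — 6 statements merged into one kernel-verified Lean document; each statement's English description precedes it below -/
import Mathlib

section
/- Let D be a finite set of real numbers with at least two elements such that Σ_{d∈D} d > 0, and let ℙ be the product probability measure on Ω = D^ℕ (each coordinate uniform on D). Then with ℙ-probability 1 the associated power series f(x) = Σ_{n=1}^∞ aₙ xⁿ satisfies lim_{x→1⁻} f(x) = +∞. -/
/-!
By the strong law of large numbers the partial sums `Sₙ = a₀ + ⋯ + aₙ₋₁` satisfy `Sₙ / n → m`
almost surely, where `m = (∑ D) / #D > 0` is the mean of a coefficient. Abel summation gives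
`∑ aₙ xⁿ⁺¹ = (1 - x) ∑ Sₙ xⁿ`, and a linear lower bound `Sₙ ≥ c n - K` with `c > 0` then yields
`∑ aₙ xⁿ⁺¹ ≥ c / (1 - x) - (c + K)`, which tends to `+∞` as `x → 1⁻`.
-/

open MeasureTheory ProbabilityTheory Filter Topology Set ENNReal Asymptotics Finset

theorem hasSum_mul_pow_succ_of_hasSum_sum_range_mul_pow {R : Type*} [CommRing R]
    [TopologicalSpace R] [IsTopologicalRing R] {a : ℕ → R} {x T : R}
    (h : HasSum (fun n => (∑ i ∈ range n, a i) * x ^ n) T) :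
    HasSum (fun n => a n * x ^ (n + 1)) ((1 - x) * T) := by
  have h_shift : HasSum (fun n => (∑ i ∈ range (n + 1), a i) * x ^ (n + 1)) T :=
    (hasSum_nat_add_iff (f := fun n => (∑ i ∈ range n, a i) * x ^ n) 1).mpr
      (by rw [sum_range_one, sum_range_zero, zero_mul, add_zero]; exact h)
  have h_abel : (fun n => (∑ i ∈ range (n + 1), a i) * x ^ (n + 1) -
      x * ((∑ i ∈ range n, a i) * x ^ n)) = fun n => a n * x ^ (n + 1) := by
    funext n
    rw [sum_range_succ]
    ring
  rw [one_sub_mul, ← h_abel]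
  exact h_shift.sub (h.mul_left x)

theorem summable_mul_pow_of_isBigO_natCast {u : ℕ → ℝ} (hu : u =O[atTop] fun n => (n : ℝ))
    {x : ℝ} (hx : ‖x‖ < 1) : Summable fun n => u n * x ^ n := by
  refine summable_of_isBigO_nat (summable_pow_mul_geometric_of_norm_lt_one 1 hx) ?_
  simpa only [pow_one] using hu.mul (isBigO_refl (fun n => x ^ n) atTop)

section Cesaro

variable {u : ℕ → ℝ} {m : ℝ}

theorem isBigO_natCast_of_tendsto_inv_mul
    (h : Tendsto (fun n : ℕ => (n : ℝ)⁻¹ * u n) atTop (𝓝 m)) : u =O[atTop] fun n => (n : ℝ) := by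
  have h_mul := (isBigO_refl (fun n : ℕ => (n : ℝ)) atTop).mul (h.isBigO_one ℝ)
  simp only [mul_one] at h_mul
  refine h_mul.congr' ?_ EventuallyEq.rfl
  filter_upwards [eventually_ne_atTop 0] with n hn
  field_simp

theorem exists_linear_lower_bound_of_tendsto_inv_mul
    (h : Tendsto (fun n : ℕ => (n : ℝ)⁻¹ * u n) atTop (𝓝 m)) (hm : 0 < m) :
    ∃ c K : ℝ, 0 < c ∧ ∀ n : ℕ, c * n - K ≤ u n := by
  have h_event : ∀ᶠ n : ℕ in atTop, 0 ≤ u n - m / 2 * n := by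
    filter_upwards [h.eventually (eventually_gt_nhds (half_lt_self hm)),
      eventually_gt_atTop 0] with n hn hn0
    have hn0' : (0 : ℝ) < n := by exact_mod_cast hn0
    rw [lt_inv_mul_iff₀ hn0'] at hn
    linarith
  obtain ⟨K, hK⟩ := (isBoundedUnder_of_eventually_ge h_event).bddBelow_range
  refine ⟨m / 2, -K, half_pos hm, fun n => ?_⟩
  linarith [hK ⟨n, rfl⟩]

end Cesaro

theorem tendsto_tsum_mul_pow_succ_atTop_of_linear_lower_bound {a : ℕ → ℝ}
    (hO : (fun n => ∑ i ∈ range n, a i) =O[atTop] fun n => (n : ℝ)) {c K : ℝ} (hc : 0 < c)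
    (hlow : ∀ n : ℕ, c * n - K ≤ ∑ i ∈ range n, a i) :
    Tendsto (fun x : ℝ => ∑' n : ℕ, a n * x ^ (n + 1)) (𝓝[<] 1) atTop := by
  have h_bound : ∀ x ∈ Ioo (0 : ℝ) 1,
      c * (1 - x)⁻¹ - (c + K) ≤ ∑' n : ℕ, a n * x ^ (n + 1) := by
    rintro x ⟨hx0, hx1⟩
    have hx : ‖x‖ < 1 := by rwa [Real.norm_of_nonneg hx0.le]
    have h1x : 0 < 1 - x := sub_pos.2 hx1
    have h_lin : HasSum (fun n : ℕ => (c * n - K) * x ^ n)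
        (c * (x / (1 - x) ^ 2) - K * (1 - x)⁻¹) := by
      simpa only [sub_mul, mul_assoc] using
        ((hasSum_coe_mul_geometric_of_norm_lt_one hx).mul_left c).sub
          ((hasSum_geometric_of_lt_one hx0.le hx1).mul_left K)
    have h_partial := (summable_mul_pow_of_isBigO_natCast hO hx).hasSum
    rw [(hasSum_mul_pow_succ_of_hasSum_sum_range_mul_pow h_partial).tsum_eq]
    calc c * (1 - x)⁻¹ - (c + K) = (1 - x) * (c * (x / (1 - x) ^ 2) - K * (1 - x)⁻¹) := by
          field_simp
          ring
      _ ≤ _ := mul_le_mul_of_nonneg_left (hasSum_le (fun n =>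
          mul_le_mul_of_nonneg_right (hlow n) (pow_nonneg hx0.le n)) h_lin h_partial) h1x.le
  have h_gap : Tendsto (fun x : ℝ => 1 - x) (𝓝[<] 1) (𝓝[>] 0) := by
    refine tendsto_nhdsWithin_iff.2
      ⟨?_, eventually_nhdsWithin_of_forall fun _ hx => sub_pos.2 (mem_Iio.1 hx)⟩
    exact ((continuous_const.sub continuous_id).tendsto' 1 0 (sub_self 1)).mono_left
      nhdsWithin_le_nhds
  have h_lim : Tendsto (fun x : ℝ => c * (1 - x)⁻¹ - (c + K)) (𝓝[<] 1) atTop :=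
    tendsto_atTop_add_const_right _ _
      ((tendsto_inv_nhdsGT_zero.comp h_gap).const_mul_atTop hc)
  exact tendsto_atTop_mono' _ (eventually_of_mem (Ioo_mem_nhdsLT zero_lt_one) h_bound) h_lim

theorem tendsto_tsum_mul_pow_succ_atTop_of_tendsto_cesaro {a : ℕ → ℝ} {m : ℝ}
    (h : Tendsto (fun n : ℕ => (n : ℝ)⁻¹ * ∑ i ∈ range n, a i) atTop (𝓝 m)) (hm : 0 < m) :
    Tendsto (fun x : ℝ => ∑' n : ℕ, a n * x ^ (n + 1)) (𝓝[<] 1) atTop := by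
  obtain ⟨c, K, hc, hlow⟩ := exists_linear_lower_bound_of_tendsto_inv_mul h hm
  exact tendsto_tsum_mul_pow_succ_atTop_of_linear_lower_bound
    (isBigO_natCast_of_tendsto_inv_mul h) hc hlow

theorem integrable_id_smul_sum_dirac (s : Finset ℝ) {c : ℝ≥0∞} (hc : c ≠ ∞) :
    Integrable id (c • ∑ d ∈ s, Measure.dirac d) :=
  ((integrable_finsetSum_measure).2 fun _ _ => integrable_dirac (by simp)).smul_measure hc

theorem integral_id_smul_sum_dirac (s : Finset ℝ) (c : ℝ≥0∞) :
    ∫ y, y ∂(c • ∑ d ∈ s, Measure.dirac d) = c.toReal * ∑ d ∈ s, d := by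
  rw [integral_smul_measure, integral_finsetSum_measure fun _ _ => integrable_dirac (by simp)]
  simp

theorem random_power_series_positive_mean_general
(D : Finset ℝ)
    (P : Measure (ℕ → ℝ))
    (hindep : iIndepFun (fun n (a : ℕ → ℝ) => a n) P)
    (hunif : ∀ n : ℕ,
      P.map (fun a => a n) = (D.card : ℝ≥0∞)⁻¹ • ∑ d ∈ D, Measure.dirac d)
    (hsum : 0 < ∑ d ∈ D, d) :
    ∀ᵐ a ∂P,
      Tendsto (fun x : ℝ => ∑' n : ℕ, a n * x ^ (n + 1)) (𝓝[<] (1 : ℝ)) atTop := by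
  have hD : D.Nonempty := nonempty_of_sum_ne_zero hsum.ne'
  have hc : (D.card : ℝ≥0∞)⁻¹ ≠ ∞ := ENNReal.inv_ne_top.2 (by simpa using hD.card_pos.ne')
  have hmeas : ∀ n, Measurable fun a : ℕ → ℝ => a n := measurable_pi_apply
  have hint : Integrable (fun a : ℕ → ℝ => a 0) P :=
    (integrable_map_measure aestronglyMeasurable_id (hmeas 0).aemeasurable).1
      (by rw [hunif 0]; exact integrable_id_smul_sum_dirac D hc)
  have hmean : P[fun a => a 0] = (D.card : ℝ)⁻¹ * ∑ d ∈ D, d := calc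
    P[fun a => a 0] = ∫ y, y ∂(P.map fun a => a 0) :=
      (integral_map (hmeas 0).aemeasurable aestronglyMeasurable_id).symm
    _ = (D.card : ℝ)⁻¹ * ∑ d ∈ D, d := by
      rw [hunif 0, integral_id_smul_sum_dirac, toReal_inv, toReal_natCast]
  have hslln := strong_law_ae (fun n (a : ℕ → ℝ) => a n) hint
    (fun i j hij => hindep.indepFun hij)
    (fun i => ⟨(hmeas i).aemeasurable, (hmeas 0).aemeasurable, by rw [hunif i, hunif 0]⟩)
  filter_upwards [hslln] with a ha
  refine tendsto_tsum_mul_pow_succ_atTop_of_tendsto_cesaro (m := (D.card : ℝ)⁻¹ * ∑ d ∈ D, d)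
    ?_ (by positivity)
  simpa [hmean] using ha

/-- **Theorem 1, first half.** If the elements of `D` have positive sum (equivalently, positive
expected value under the uniform distribution), then almost surely
`lim_{x→1⁻} ∑ aₙ xⁿ = +∞`. Here `P` is the product of uniform distributions on `D`,
realized as a probability measure on `ℕ → ℝ` with independent, uniform-on-`D` coordinates. -/
theorem random_power_series_positive_mean
(D : Finset ℝ) (hD : 2 ≤ D.card)
    (P : Measure (ℕ → ℝ)) [IsProbabilityMeasure P]
    (hindep : iIndepFun (fun n (a : ℕ → ℝ) => a n) P)
    (hunif : ∀ n : ℕ,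
      P.map (fun a => a n) = (D.card : ℝ≥0∞)⁻¹ • ∑ d ∈ D, Measure.dirac d)
    (hsum : 0 < ∑ d ∈ D, d) :
    ∀ᵐ a ∂P,
      Tendsto (fun x : ℝ => ∑' n : ℕ, a n * x ^ (n + 1)) (𝓝[<] (1 : ℝ)) atTop :=
  random_power_series_positive_mean_general D P hindep hunif hsum
end

section
/- Let D be a finite set of real numbers containing at least one positive and at least one negative element, and give Ω = D^ℕ the product topology (D discrete). Then the set of sequences (aₙ) ∈ Ω for which f(x) = Σ_{n=1}^∞ aₙ xⁿ satisfies both limsup_{x→1⁻} f(x) = +∞ and liminf_{x→1⁻} f(x) = −∞ is residual (comeager) in Ω. -/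
open Filter Topology Set

/-!
For fixed `x ∈ (-1, 1)` the value `∑ aₙ xⁿ⁺¹` depends continuously on `a ∈ D^ℕ`, so for an
antitone basis `(sₖ)` of `𝓝[<] 1` the sets `⋃_{x ∈ sₖ} {a | k < ∑ aₙ xⁿ⁺¹}` are open. They are
dense because they contain every sequence that is eventually equal to a positive digit `d`, whose
series is a polynomial plus `d xᴺ⁺¹ / (1 - x) → +∞`, and such sequences are dense in the product
topology. Their intersection is residual and consists of sequences with `limsup = +∞`; a negative
digit gives `liminf = -∞` in the same way.
-/

theorem tendsto_inv_one_sub_nhdsLT_one : Tendsto (fun x : ℝ => (1 - x)⁻¹) (𝓝[<] 1) atTop := by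
  refine tendsto_inv_nhdsGT_zero.comp (tendsto_nhdsWithin_iff.2 ⟨?_, ?_⟩)
  · have : Tendsto (fun x : ℝ => 1 - x) (𝓝 1) (𝓝 (1 - 1)) := tendsto_const_nhds.sub tendsto_id
    exact (sub_self (1 : ℝ) ▸ this).mono_left nhdsWithin_le_nhds
  · filter_upwards [self_mem_nhdsWithin] with x (hx : x < 1) using sub_pos.2 hx

theorem tsum_mul_pow_succ_of_forall_ge_eq {b : ℕ → ℝ} {d : ℝ} {N : ℕ} (hb : ∀ n ≥ N, b n = d)
    {x : ℝ} (hx : |x| < 1) :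
    ∑' n, b n * x ^ (n + 1) =
      ∑ n ∈ Finset.range N, b n * x ^ (n + 1) + d * x ^ (N + 1) * (1 - x)⁻¹ := by
  have htail : ∀ n, b (n + N) * x ^ (n + N + 1) = d * x ^ (N + 1) * x ^ n := fun n => by
    rw [hb _ (Nat.le_add_left N n)]; ring
  have hsum : Summable fun n => b (n + N) * x ^ (n + N + 1) :=
    ((summable_geometric_of_abs_lt_one hx).mul_left _).congr fun n => (htail n).symm
  rw [← Summable.sum_add_tsum_nat_add' (f := fun n => b n * x ^ (n + 1)) hsum, tsum_congr htail,
    tsum_mul_left, tsum_geometric_of_abs_lt_one hx]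

theorem tendsto_tsum_mul_pow_succ_atTop {b : ℕ → ℝ} {d : ℝ} (hd : 0 < d)
    (hb : ∀ᶠ n in atTop, b n = d) :
    Tendsto (fun x => ∑' n, b n * x ^ (n + 1)) (𝓝[<] 1) atTop := by
  obtain ⟨N, hN⟩ := eventually_atTop.1 hb
  have hpoly : Continuous fun x : ℝ => ∑ n ∈ Finset.range N, b n * x ^ (n + 1) := by fun_prop
  have hcoef : Tendsto (fun x : ℝ => d * x ^ (N + 1)) (𝓝[<] 1) (𝓝 d) := by
    simpa using (((continuous_pow (N + 1)).tendsto' 1 1 (one_pow _)).const_mul d).mono_left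
      nhdsWithin_le_nhds
  refine ((hpoly.tendsto 1).mono_left nhdsWithin_le_nhds |>.add_atTop
    (hcoef.pos_mul_atTop hd tendsto_inv_one_sub_nhdsLT_one)).congr' ?_
  filter_upwards [Ioo_mem_nhdsLT (show (-1 : ℝ) < 1 by norm_num)] with x hx
  rw [tsum_mul_pow_succ_of_forall_ge_eq hN (abs_lt.2 hx)]

theorem tendsto_tsum_mul_pow_succ_atBot {b : ℕ → ℝ} {d : ℝ} (hd : d < 0)
    (hb : ∀ᶠ n in atTop, b n = d) :
    Tendsto (fun x => ∑' n, b n * x ^ (n + 1)) (𝓝[<] 1) atBot := by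
  have := tendsto_tsum_mul_pow_succ_atTop (b := -b) (neg_pos.2 hd) (hb.mono fun n h => by simp [h])
  simpa only [Pi.neg_apply, neg_mul, tsum_neg, tendsto_neg_atTop_iff] using this

theorem dense_setOf_eventually_eq {α : Type*} [TopologicalSpace α] (d : α) :
    Dense {c : ℕ → α | ∀ᶠ n in atTop, c n = d} := by
  intro b
  refine mem_closure_of_tendsto (f := fun N i => if i < N then b i else d) (b := atTop)
    (tendsto_pi_nhds.2 fun i => tendsto_const_nhds.congr' ?_) (Eventually.of_forall fun N => ?_)
  · filter_upwards [eventually_gt_atTop i] with N hN using (if_pos hN).symm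
  · filter_upwards [eventually_ge_atTop N] with i hi using if_neg (not_lt.2 hi)

theorem continuous_tsum_coe_mul_pow_succ (D : Finset ℝ) {x : ℝ} (hx : |x| < 1) :
    Continuous fun a : ℕ → D => ∑' n, (a n : ℝ) * x ^ (n + 1) := by
  obtain ⟨C, hC⟩ := (D.finite_toSet.image abs).bddAbove
  refine continuous_tsum (u := fun n => C * |x| ^ n) (fun n => by fun_prop)
    ((summable_geometric_of_abs_lt_one (by rwa [abs_abs])).mul_left C) fun n a => ?_
  have hCa : |(a n : ℝ)| ≤ C := hC (mem_image_of_mem abs (a n).2)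
  calc ‖(a n : ℝ) * x ^ (n + 1)‖ = |(a n : ℝ)| * |x| ^ n * |x| := by
        rw [Real.norm_eq_abs, abs_mul, abs_pow, pow_succ, mul_assoc]
    _ ≤ C * |x| ^ n * 1 := by
        have hC0 : 0 ≤ C := (abs_nonneg _).trans hCa
        gcongr
    _ = C * |x| ^ n := mul_one _

section Residual

variable {ι X : Type*} [TopologicalSpace X] {l : Filter ι} [l.IsCountablyGenerated] [l.NeBot]
  {F : ι → X → ℝ}

theorem residual_frequently_lt (hF : ∀ᶠ i in l, Continuous (F i))
    (hdense : Dense {a | Tendsto (fun i => F i a) l atTop}) :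
    {a | ∀ M : ℝ, ∃ᶠ i in l, M < F i a} ∈ residual X := by
  obtain ⟨s, hs⟩ := l.exists_antitone_basis
  set U : ℕ → Set X := fun k => ⋃ i ∈ s k ∩ {i | Continuous (F i)}, {a | (k : ℝ) < F i a}
  have hopen : ∀ k, IsOpen (U k) := fun k =>
    isOpen_biUnion fun i hi => isOpen_lt continuous_const hi.2
  have hUdense : ∀ k, Dense (U k) := fun k => hdense.mono fun a ha => by
    have hsk : ∀ᶠ i in l, i ∈ s k := hs.mem k
    obtain ⟨i, hik, hi⟩ := ((hsk.and hF).and (ha.eventually_gt_atTop (k : ℝ))).exists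
    exact mem_biUnion hik hi
  refine mem_of_superset (countable_iInter_mem.2 fun k => residual_of_dense_open (hopen k)
    (hUdense k)) fun a ha M => (hs.hasBasis_ge ⌈M⌉₊).frequently_iff.2 fun k hk => ?_
  obtain ⟨i, hi, hlt⟩ := mem_iUnion₂.1 (mem_iInter.1 ha k)
  exact ⟨i, hi.1, (Nat.le_ceil M).trans (Nat.cast_le.2 hk) |>.trans_lt hlt⟩

theorem residual_limsup_coe_eq_top (hF : ∀ᶠ i in l, Continuous (F i))
    (hdense : Dense {a | Tendsto (fun i => F i a) l atTop}) :
    {a | limsup (fun i => (F i a : EReal)) l = ⊤} ∈ residual X := by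
  refine mem_of_superset (residual_frequently_lt hF hdense) fun a ha => ?_
  refine (EReal.eq_top_iff_forall_lt _).2 fun y =>
    (EReal.coe_lt_coe_iff.2 (lt_add_one y)).trans_le ?_
  exact le_limsup_of_frequently_le' ((ha (y + 1)).mono fun i hi => EReal.coe_le_coe_iff.2 hi.le)

theorem residual_liminf_coe_eq_bot (hF : ∀ᶠ i in l, Continuous (F i))
    (hdense : Dense {a | Tendsto (fun i => F i a) l atBot}) :
    {a | liminf (fun i => (F i a : EReal)) l = ⊥} ∈ residual X := by
  have hneg := residual_limsup_coe_eq_top (F := fun i a => -F i a)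
    (hF.mono fun i h => h.neg) (by simpa only [tendsto_neg_atTop_iff] using hdense)
  refine mem_of_superset hneg fun a ha => ?_
  have : limsup (-fun i => (F i a : EReal)) l = ⊤ := by
    simpa only [Pi.neg_def, EReal.coe_neg, mem_ofPred_eq] using ha
  rwa [EReal.limsup_neg, EReal.neg_eq_top_iff] at this

end Residual

/-- **Theorem 3, second part.** If the finite set `D` contains a positive and a negative
element, then the set of sequences `(aₙ) ∈ D^ℕ` (product topology, `D` discrete) for which
`limsup_{x→1⁻} ∑ aₙ xⁿ = +∞` and `liminf_{x→1⁻} ∑ aₙ xⁿ = -∞` is residual. -/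
theorem residual_power_series_mixed_signs
    (D : Finset ℝ) (hpos : ∃ d ∈ D, 0 < d) (hneg : ∃ d ∈ D, d < 0) :
    {a : ℕ → D |
      limsup (fun x : ℝ => ((∑' n : ℕ, (a n : ℝ) * x ^ (n + 1) : ℝ) : EReal))
        (𝓝[<] (1 : ℝ)) = ⊤ ∧
      liminf (fun x : ℝ => ((∑' n : ℕ, (a n : ℝ) * x ^ (n + 1) : ℝ) : EReal))
        (𝓝[<] (1 : ℝ)) = ⊥}
      ∈ residual (ℕ → D) := by
  obtain ⟨dp, hdpD, hdp⟩ := hpos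
  obtain ⟨dm, hdmD, hdm⟩ := hneg
  have hcont : ∀ᶠ x in 𝓝[<] (1 : ℝ), Continuous fun a : ℕ → D => ∑' n, (a n : ℝ) * x ^ (n + 1) := by
    filter_upwards [Ioo_mem_nhdsLT (show (-1 : ℝ) < 1 by norm_num)] with x hx
    exact continuous_tsum_coe_mul_pow_succ D (abs_lt.2 hx)
  have hcoe {d : D} {a : ℕ → D} (ha : ∀ᶠ n in atTop, a n = d) : ∀ᶠ n in atTop, (a n : ℝ) = d :=
    ha.mono fun n h => congrArg Subtype.val h
  exact inter_mem
    (residual_limsup_coe_eq_top hcont <| (dense_setOf_eventually_eq ⟨dp, hdpD⟩).mono fun a ha =>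
      tendsto_tsum_mul_pow_succ_atTop hdp (hcoe ha))
    (residual_liminf_coe_eq_bot hcont <| (dense_setOf_eventually_eq ⟨dm, hdmD⟩).mono fun a ha =>
      tendsto_tsum_mul_pow_succ_atBot hdm (hcoe ha))
end

section
/- Let D be a finite set of real numbers with at least two elements such that Σ_{d∈D} d = 0, and give Ω = D^ℕ the product topology (D discrete). Then the set of sequences (aₙ) ∈ Ω such that for every real number y there are infinitely many x ∈ (0,1) with y = Σ_{n=1}^∞ aₙ xⁿ is residual (comeager) in Ω. -/
/-!
Write `f_a(x) = ∑ aₙ xⁿ`. For a fixed `x ∈ [0,1)` the map `a ↦ f_a(x)` is continuous on `D^ℕ`, so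
for every `M` and every left neighbourhood `W` of `1` the sets `{a | ∃ x ∈ W, f_a(x) > M}` and
`{a | ∃ x ∈ W, f_a(x) < -M}` are open. They are also dense: since the digits sum to zero, `D`
contains some `p > 0` and some `q < 0`, and any cylinder contains a sequence that is eventually
`p` (resp. `q`), whose series is a polynomial plus `p x^(N+1) / (1 - x)` and so tends to `+∞`
(resp. `-∞`) as `x → 1⁻`. Countably many such sets suffice, so for a residual set of `a` the
continuous function `f_a` oscillates unboundedly in every left neighbourhood of `1`, and the
intermediate value theorem makes it take every value at points accumulating at `1`.
-/

open Filter Topology Set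

theorem exists_pos_and_exists_neg_of_sum_eq_zero {α : Type*} [AddCommGroup α] [LinearOrder α]
    [IsOrderedAddMonoid α] {D : Finset α} (hD : 2 ≤ D.card) (hsum : ∑ d ∈ D, d = 0) :
    (∃ p ∈ D, 0 < p) ∧ ∃ q ∈ D, q < 0 := by
  obtain ⟨d, hd, hd0⟩ := Finset.exists_mem_ne hD 0
  constructor
  · by_contra! h
    exact hd0 ((Finset.sum_eq_zero_iff_of_nonpos h).1 hsum d hd)
  · by_contra! h
    exact hd0 ((Finset.sum_eq_zero_iff_of_nonneg h).1 hsum d hd)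

theorem dense_setOf_eventually_cofinite_eq {ι X : Type*} [TopologicalSpace X] (e : X) :
    Dense {a : ι → X | ∀ᶠ i in cofinite, a i = e} := by
  classical
  refine dense_iff_inter_open.2 fun O hO ⟨a, ha⟩ => ?_
  obtain ⟨I, u, hu, hsub⟩ := isOpen_pi_iff.1 hO a ha
  refine ⟨fun i => if i ∈ I then a i else e, hsub fun i hi => ?_, ?_⟩
  · simpa only [if_pos (Finset.mem_coe.1 hi)] using (hu i hi).2
  · filter_upwards [I.finite_toSet.compl_mem_cofinite] with i hi
    simp only [if_neg (show i ∉ I from hi)]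

theorem Set.infinite_of_frequently_nhdsLT {α : Type*} [TopologicalSpace α] [T1Space α]
    [Preorder α] {s : Set α} {b : α} (h : ∃ᶠ x in 𝓝[<] b, x ∈ s) : s.Infinite :=
  frequently_cofinite_iff_infinite.1 <|
    (h.filter_mono (nhdsWithin_mono b fun _ hx => ne_of_lt hx)).filter_mono (nhdsNE_le_cofinite b)

theorem frequently_eq_of_frequently_lt_of_frequently_gt {α δ : Type*}
    [ConditionallyCompleteLinearOrder α] [TopologicalSpace α] [OrderTopology α] [DenselyOrdered α]
    [NoMinOrder α] [LinearOrder δ] [TopologicalSpace δ] [OrderClosedTopology δ] {f : α → δ} {b : α}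
    {y : δ} (hf : ∀ᶠ x in 𝓝[<] b, ContinuousAt f x) (hlt : ∃ᶠ x in 𝓝[<] b, f x < y)
    (hgt : ∃ᶠ x in 𝓝[<] b, y < f x) : ∃ᶠ x in 𝓝[<] b, f x = y := by
  obtain ⟨l₀, hl₀, hcontAt⟩ := (nhdsLT_basis b).mem_iff.1 hf
  rw [(nhdsLT_basis b).frequently_iff] at hlt hgt ⊢
  intro l hl
  obtain ⟨x₁, hx₁, h₁⟩ := hlt (max l l₀) (max_lt hl hl₀)
  obtain ⟨x₂, hx₂, h₂⟩ := hgt (max l l₀) (max_lt hl hl₀)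
  have hsub : uIcc x₁ x₂ ⊆ Ioo (max l l₀) b := ordConnected_Ioo.uIcc_subset hx₁ hx₂
  have hcont : ContinuousOn f (uIcc x₁ x₂) := fun x hx =>
    (hcontAt (Ioo_subset_Ioo_left (le_max_right l l₀) (hsub hx))).continuousWithinAt
  obtain ⟨x, hx, hfx⟩ := intermediate_value_uIcc hcont (mem_uIcc.2 (Or.inl ⟨h₁.le, h₂.le⟩))
  exact ⟨x, Ioo_subset_Ioo_left (le_max_left l l₀) (hsub hx), hfx⟩

namespace ResidualPowerSeries

/-- The coefficient `a n` multiplies `x ^ (n + 1)`: the series has no constant term. -/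
noncomputable def series (a : ℕ → ℝ) (x : ℝ) : ℝ := ∑' n, a n * x ^ (n + 1)

theorem norm_mul_pow_succ_le {c C x r : ℝ} (hc : |c| ≤ C) (hx : |x| ≤ r) (n : ℕ) :
    ‖c * x ^ (n + 1)‖ ≤ C * r ^ (n + 1) := by
  rw [Real.norm_eq_abs, abs_mul, abs_pow]
  exact mul_le_mul hc (pow_le_pow_left₀ (abs_nonneg x) hx _) (by positivity)
    ((abs_nonneg c).trans hc)

theorem summable_mul_pow_succ {C r : ℝ} (hr₀ : 0 ≤ r) (hr : r < 1) :
    Summable fun n : ℕ => C * r ^ (n + 1) :=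
  ((summable_nat_add_iff 1).2 (summable_geometric_of_lt_one hr₀ hr)).mul_left C

theorem continuousAt_series {a : ℕ → ℝ} {C x : ℝ} (ha : ∀ n, |a n| ≤ C) (hx : |x| < 1) :
    ContinuousAt (series a) x := by
  obtain ⟨r, hxr, hr⟩ := exists_between hx
  have hcont : ContinuousOn (series a) (Icc (-r) r) :=
    continuousOn_tsum (fun n => by fun_prop) (summable_mul_pow_succ ((abs_nonneg x).trans hxr.le) hr)
      fun n y hy => norm_mul_pow_succ_le (ha n) (abs_le.2 hy) n
  exact hcont.continuousAt (Icc_mem_nhds (abs_lt.1 hxr).1 (abs_lt.1 hxr).2)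

theorem continuous_series_apply {D : Set ℝ} {C x : ℝ} (hD : ∀ d ∈ D, |d| ≤ C) (hx : |x| < 1) :
    Continuous fun a : ℕ → D => series (a ·) x :=
  continuous_tsum (fun n => by fun_prop) (summable_mul_pow_succ (abs_nonneg x) hx)
    fun n a => norm_mul_pow_succ_le (hD _ (a n).2) le_rfl n

theorem series_eq_sum_range_add_geometric {a : ℕ → ℝ} {N : ℕ} {e x : ℝ}
    (ha : ∀ n ≥ N, a n = e) (hx : |x| < 1) :
    series a x = ∑ n ∈ Finset.range N, a n * x ^ (n + 1) + e * x ^ (N + 1) / (1 - x) := by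
  have htail : HasSum (fun i => a (i + N) * x ^ (i + N + 1)) (e * x ^ (N + 1) / (1 - x)) := by
    have hterm : ∀ i, a (i + N) * x ^ (i + N + 1) = e * x ^ (N + 1) * x ^ i := fun i => by
      rw [ha _ (Nat.le_add_left N i)]; ring
    simpa only [hterm, div_eq_mul_inv] using (hasSum_geometric_of_abs_lt_one hx).mul_left _
  refine ((hasSum_nat_add_iff' N).1 ?_).tsum_eq
  rwa [add_sub_cancel_left]

theorem tendsto_one_sub_mul_series {a : ℕ → ℝ} {e : ℝ} (ha : ∀ᶠ n in atTop, a n = e) :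
    Tendsto (fun x => (1 - x) * series a x) (𝓝[<] 1) (𝓝 e) := by
  obtain ⟨N, hN⟩ := eventually_atTop.1 ha
  set g : ℝ → ℝ := fun x => (1 - x) * ∑ n ∈ Finset.range N, a n * x ^ (n + 1) + e * x ^ (N + 1)
  have hg : Tendsto g (𝓝[<] 1) (𝓝 e) := by
    simpa [g] using ((show Continuous g by fun_prop).tendsto 1).mono_left
      (nhdsWithin_le_nhds (s := Iio 1))
  refine hg.congr' ?_
  filter_upwards [Ioo_mem_nhdsLT (show (-1 : ℝ) < 1 by norm_num)] with x hx
  have hx1 : 1 - x ≠ 0 := sub_ne_zero.2 hx.2.ne'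
  rw [series_eq_sum_range_add_geometric hN (abs_lt.2 hx)]
  simp only [g]
  field_simp

theorem tendsto_inv_one_sub_nhdsLT_one : Tendsto (fun x : ℝ => (1 - x)⁻¹) (𝓝[<] 1) atTop := by
  refine tendsto_inv_nhdsGT_zero.comp (tendsto_nhdsWithin_iff.2 ⟨?_, ?_⟩)
  · simpa using ((continuous_sub_left (1 : ℝ)).tendsto 1).mono_left
      (nhdsWithin_le_nhds (s := Iio 1))
  · filter_upwards [self_mem_nhdsWithin] with x hx
    exact sub_pos.2 (mem_Iio.1 hx)

theorem one_sub_mul_series_mul_inv_eventuallyEq (a : ℕ → ℝ) :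
    (fun x => (1 - x) * series a x * (1 - x)⁻¹) =ᶠ[𝓝[<] 1] series a := by
  filter_upwards [self_mem_nhdsWithin] with x hx
  rw [mul_comm (1 - x), mul_inv_cancel_right₀ (sub_ne_zero.2 (mem_Iio.1 hx).ne')]

theorem tendsto_series_atTop {a : ℕ → ℝ} {e : ℝ} (he : 0 < e) (ha : ∀ᶠ n in atTop, a n = e) :
    Tendsto (series a) (𝓝[<] 1) atTop :=
  ((tendsto_one_sub_mul_series ha).pos_mul_atTop he tendsto_inv_one_sub_nhdsLT_one).congr'
    (one_sub_mul_series_mul_inv_eventuallyEq a)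

theorem tendsto_series_atBot {a : ℕ → ℝ} {e : ℝ} (he : e < 0) (ha : ∀ᶠ n in atTop, a n = e) :
    Tendsto (series a) (𝓝[<] 1) atBot :=
  ((tendsto_one_sub_mul_series ha).neg_mul_atTop he tendsto_inv_one_sub_nhdsLT_one).congr'
    (one_sub_mul_series_mul_inv_eventuallyEq a)

theorem residual_frequently_series_mem {D : Set ℝ} {C : ℝ} (hD : ∀ d ∈ D, |d| ≤ C) (e : D)
    {L : Filter ℝ}
    (hL : ∀ a : ℕ → ℝ, (∀ᶠ n in atTop, a n = e) → Tendsto (series a) (𝓝[<] 1) L)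
    {V : Set ℝ} (hVo : IsOpen V) (hV : V ∈ L) :
    ∀ᶠ a in residual (ℕ → D), ∃ᶠ x in 𝓝[<] 1, series (a ·) x ∈ V := by
  obtain ⟨W, hW⟩ := (𝓝[<] (1 : ℝ)).exists_antitone_basis
  have hWmem : ∀ k, W k ∩ Ioo 0 1 ∈ 𝓝[<] 1 := fun k =>
    inter_mem (hW.mem k) (Ioo_mem_nhdsLT one_pos)
  simp_rw [hW.frequently_iff, true_imp_iff]
  refine eventually_countable_forall.2 fun k => mem_of_superset (residual_of_dense_open
    (s := {a : ℕ → D | ∃ x ∈ W k ∩ Ioo 0 1, series (a ·) x ∈ V}) ?_ ?_)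
    fun a ⟨x, hx, hxV⟩ => ⟨x, hx.1, hxV⟩
  · refine isOpen_iff_forall_mem_open.2 fun a ⟨x, hx, hxV⟩ =>
      ⟨_, fun b hb => ⟨x, hx, hb⟩, hVo.preimage (continuous_series_apply hD ?_), hxV⟩
    exact abs_lt.2 ⟨by linarith [hx.2.1], hx.2.2⟩
  · refine (dense_setOf_eventually_cofinite_eq e).mono
      fun a (ha : ∀ᶠ n in cofinite, a n = e) => ?_
    rw [Nat.cofinite_eq_atTop] at ha
    exact (((hL _ (ha.mono fun n hn => congrArg Subtype.val hn)).eventually hV).and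
      (hWmem k)).exists.imp fun x hx => ⟨hx.2, hx.1⟩

end ResidualPowerSeries

open ResidualPowerSeries

/-- **Corollary (categorial part).** If the finite set `D` has at least two elements and its
elements sum to zero, then the set of sequences `(aₙ) ∈ D^ℕ` (product topology, `D` discrete)
such that for every real `y` there are infinitely many `x ∈ (0,1)` with `y = ∑ aₙ xⁿ`
is residual. -/
theorem residual_power_series_hits_every_value
    (D : Finset ℝ) (hD : 2 ≤ D.card) (hsum : ∑ d ∈ D, d = 0) :
    {a : ℕ → D | ∀ y : ℝ,
      {x : ℝ | x ∈ Set.Ioo (0 : ℝ) 1 ∧ y = ∑' n : ℕ, (a n : ℝ) * x ^ (n + 1)}.Infinite}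
      ∈ residual (ℕ → D) := by
  obtain ⟨⟨p, hpD, hp⟩, ⟨q, hqD, hq⟩⟩ := exists_pos_and_exists_neg_of_sum_eq_zero hD hsum
  have hC : ∀ d ∈ (D : Set ℝ), |d| ≤ ∑ d ∈ D, |d| := fun d hd =>
    Finset.single_le_sum (fun _ _ => abs_nonneg _) hd
  have hup : ∀ᶠ a in residual (ℕ → D), ∀ M : ℕ, ∃ᶠ x in 𝓝[<] 1, series (a ·) x ∈ Ioi (M : ℝ) :=
    eventually_countable_forall.2 fun M => residual_frequently_series_mem hC ⟨p, hpD⟩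
      (fun _ => tendsto_series_atTop hp) isOpen_Ioi (Ioi_mem_atTop _)
  have hdown : ∀ᶠ a in residual (ℕ → D), ∀ M : ℕ, ∃ᶠ x in 𝓝[<] 1, series (a ·) x ∈ Iio (-M : ℝ) :=
    eventually_countable_forall.2 fun M => residual_frequently_series_mem hC ⟨q, hqD⟩
      (fun _ => tendsto_series_atBot hq) isOpen_Iio (Iio_mem_atBot _)
  filter_upwards [hup, hdown] with a hup hdown y
  obtain ⟨M, hM⟩ := exists_nat_gt |y|
  have hcont : ∀ᶠ x in 𝓝[<] (1 : ℝ), ContinuousAt (series (a ·)) x := by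
    filter_upwards [Ioo_mem_nhdsLT (show (-1 : ℝ) < 1 by norm_num)] with x hx
    exact continuousAt_series (fun n => hC _ (a n).2) (abs_lt.2 hx)
  have hhit := frequently_eq_of_frequently_lt_of_frequently_gt (y := y) hcont
    ((hdown M).mono fun x hx => by linarith [neg_abs_le y, mem_Iio.1 hx])
    ((hup M).mono fun x hx => by linarith [le_abs_self y, mem_Ioi.1 hx])
  exact Set.infinite_of_frequently_nhdsLT <|
    (hhit.and_eventually (Ioo_mem_nhdsLT one_pos)).mono fun x hx => ⟨hx.2, hx.1.symm⟩
end

section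
/- Let D = {d₁, …, d_k} be a finite set of k ≥ 2 distinct real numbers. For every ε > 0 there exists N₀ ∈ ℕ such that for all N ≥ N₀ there exist a subset S ⊆ D^N with #S ≥ (1 − ε)·k^N and an injective map g : S → D^N such that for every (a₁, …, a_N) ∈ S, writing g((a₁, …, a_N)) = (b₁, …, b_N), one has Σ_{n=1}^N bₙ = (d₂ − d₁) + Σ_{n=1}^N aₙ. -/
/-!
Replacing every `d₁` by `d₂` sends a tuple `a` to a tuple `b` without `d₁`. If `b` has `d₂` at
`t` positions, the tuples over `b` correspond to the subsets of these positions (where `a` has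
`d₁`), and each position in the subset lowers the coordinate sum by `d₂ - d₁`. So it suffices to
inject, inside every fibre, as much as possible of the layer of `(m + 1)`-subsets into the layer
of `m`-subsets; by unimodality of the binomial coefficients this leaves out only `C(t, ⌊t/2⌋)` of
the `2^t` tuples of the fibre.

Since `t · C(t, ⌊t/2⌋)² ≤ 4^t`, we have `C(t, ⌊t/2⌋) ≤ δ 2^t + C 2^{-t}` for all `t`, and summing
`r^t` over all `b` gives `(k - 2 + r)^N`: this is `k^N` for `r = 2` and `(k - 3/2)^N = o(k^N)`
for `r = 1/2`.
-/

open Finset Filter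
open Fintype (piFinset)

theorem Nat.choose_succ_le_of_half_le {n r : ℕ} (h : n / 2 ≤ r) :
    n.choose (r + 1) ≤ n.choose r := by
  refine Nat.le_of_mul_le_mul_right ?_ r.succ_pos
  rw [Nat.choose_succ_right_eq]
  exact Nat.mul_le_mul_left _ (by omega)

theorem Finset.sum_range_min_add_of_unimodal {M : Type*} [AddCommMonoid M] [LinearOrder M]
    {f : ℕ → M} {h n : ℕ} (hn : h ≤ n) (hmono : ∀ m < h, f m ≤ f (m + 1))
    (hanti : ∀ m, h ≤ m → f (m + 1) ≤ f m) :
    ∑ m ∈ range n, min (f (m + 1)) (f m) + f h = ∑ m ∈ range (n + 1), f m := by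
  induction n, hn using Nat.le_induction with
  | base =>
    rw [sum_range_succ]
    congr 1
    exact sum_congr rfl fun m hm => min_eq_right (hmono m (mem_range.1 hm))
  | succ n hn ih =>
    rw [sum_range_succ, sum_range_succ _ (n + 1), ← ih, min_eq_left (hanti n hn)]
    abel

theorem Nat.two_pow_le_sum_range_min_choose_add {t n : ℕ} (ht : t ≤ n) :
    2 ^ t ≤ ∑ m ∈ range n, min (t.choose (m + 1)) (t.choose m) + t.choose (t / 2) :=
  calc 2 ^ t = ∑ m ∈ range t, min (t.choose (m + 1)) (t.choose m) + t.choose (t / 2) := by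
        rw [sum_range_min_add_of_unimodal (f := t.choose) (t.div_le_self 2)
          (fun _ hm => choose_le_succ_of_lt_half_left hm)
          (fun _ hm => choose_succ_le_of_half_le hm), sum_range_choose]
    _ ≤ _ := by gcongr

theorem Nat.two_mul_add_one_mul_centralBinom_sq_le (n : ℕ) :
    (2 * n + 1) * centralBinom n ^ 2 ≤ 16 ^ n := by
  induction n with
  | zero => simp
  | succ n ih =>
    refine Nat.le_of_mul_le_mul_left ?_ (by positivity : 0 < (n + 1) ^ 2)
    calc (n + 1) ^ 2 * ((2 * (n + 1) + 1) * centralBinom (n + 1) ^ 2)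
        = (2 * n + 3) * ((n + 1) * centralBinom (n + 1)) ^ 2 := by ring
      _ = (2 * n + 3) * (2 * n + 1) * 4 * ((2 * n + 1) * centralBinom n ^ 2) := by
          rw [succ_mul_centralBinom_succ]; ring
      _ ≤ (n + 1) ^ 2 * 16 * 16 ^ n := Nat.mul_le_mul (by nlinarith) ih
      _ = (n + 1) ^ 2 * 16 ^ (n + 1) := by ring

theorem Nat.mul_choose_half_sq_le (t : ℕ) : t * t.choose (t / 2) ^ 2 ≤ 4 ^ t := by
  obtain ⟨n, rfl | rfl⟩ := t.even_or_odd'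
  · have hcb := two_mul_add_one_mul_centralBinom_sq_le n
    rw [show 2 * n / 2 = n by omega, ← centralBinom_eq_two_mul_choose, pow_mul]
    norm_num
    nlinarith
  · have hcb := two_mul_add_one_mul_centralBinom_sq_le (n + 1)
    have hpascal : centralBinom (n + 1) = 2 * (2 * n + 1).choose n := by
      rw [centralBinom_eq_two_mul_choose, show 2 * (n + 1) = 2 * n + 1 + 1 by ring,
        choose_succ_succ, choose_symm_half]
      ring
    have h16 : 16 ^ (n + 1) = 4 * 4 ^ (2 * n + 1) := by
      rw [pow_succ, pow_succ, pow_mul]; norm_num; ring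
    rw [show (2 * n + 1) / 2 = n by omega]
    rw [hpascal] at hcb
    nlinarith

theorem Nat.eventually_choose_half_le {δ : ℝ} (hδ : 0 < δ) :
    ∀ᶠ t : ℕ in atTop, (t.choose (t / 2) : ℝ) ≤ δ * 2 ^ t := by
  filter_upwards [eventually_ge_atTop ⌈δ⁻¹ ^ 2⌉₊] with t ht
  have hsq : (t : ℝ) * (t.choose (t / 2) : ℝ) ^ 2 ≤ (2 ^ t) ^ 2 := by
    rw [← pow_mul, mul_comm t 2, pow_mul]; exact_mod_cast mul_choose_half_sq_le t
  have ht : 1 ≤ δ ^ 2 * t :=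
    calc (1 : ℝ) = δ ^ 2 * δ⁻¹ ^ 2 := by field_simp
      _ ≤ δ ^ 2 * t := by gcongr; exact Nat.ceil_le.1 ht
  rw [← pow_le_pow_iff_left₀ (by positivity) (by positivity) two_ne_zero]
  nlinarith [sq_nonneg (t.choose (t / 2) : ℝ)]

theorem Nat.exists_choose_half_le {δ : ℝ} (hδ : 0 < δ) :
    ∃ C : ℝ, ∀ t : ℕ, (t.choose (t / 2) : ℝ) ≤ δ * 2 ^ t + C * (1 / 2) ^ t := by
  obtain ⟨T, hT⟩ := eventually_atTop.1 (eventually_choose_half_le hδ)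
  refine ⟨4 ^ T, fun t => ?_⟩
  rcases le_or_gt T t with hTt | htT
  · linarith [hT t hTt, show (0 : ℝ) ≤ 4 ^ T * (1 / 2) ^ t by positivity]
  · calc (t.choose (t / 2) : ℝ) ≤ 4 ^ t * (1 / 2) ^ t := by
          rw [← mul_pow]; norm_num; exact_mod_cast t.choose_le_two_pow _
      _ ≤ δ * 2 ^ t + 4 ^ T * (1 / 2) ^ t := by
          have : (4 : ℝ) ^ t ≤ 4 ^ T := pow_le_pow_right₀ (by norm_num) htT.le
          nlinarith [show (0 : ℝ) ≤ δ * 2 ^ t by positivity,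
            show (0 : ℝ) < (1 / 2) ^ t by positivity]

theorem eventually_mul_pow_le_mul_pow {a b c δ : ℝ} (ha : 0 ≤ a) (hab : a < b) (hδ : 0 < δ) :
    ∀ᶠ N : ℕ in atTop, c * a ^ N ≤ δ * b ^ N := by
  have hb : 0 < b := ha.trans_lt hab
  have hlim : Tendsto (fun N : ℕ => c * (a / b) ^ N) atTop (nhds 0) := by
    simpa using (tendsto_pow_atTop_nhds_zero_of_lt_one (div_nonneg ha hb.le)
      ((div_lt_one hb).2 hab)).const_mul c
  filter_upwards [hlim.eventually (gt_mem_nhds hδ)] with N hN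
  calc c * a ^ N = c * (a / b) ^ N * b ^ N := by
        rw [div_pow, mul_assoc, div_mul_cancel₀ _ (by positivity)]
    _ ≤ δ * b ^ N := by gcongr

theorem Finset.exists_subset_injOn_mapsTo {α : Type*} (s t : Finset α) :
    ∃ s' ⊆ s, #s' = min #s #t ∧ ∃ f : α → α, Set.InjOn f s' ∧ Set.MapsTo f s' t := by
  obtain ⟨s', hs', hcard⟩ := exists_subset_card_eq (min_le_left #s #t)
  refine ⟨s', hs', hcard, ?_⟩
  rcases isEmpty_or_nonempty α with hα | hα
  · exact ⟨id, fun a => isEmptyElim a, fun a => isEmptyElim a⟩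
  obtain ⟨f, hmaps, hinj⟩ := s'.finite_toSet.exists_injOn_of_encard_le (t := (t : Set α))
    (by simp only [Set.encard_coe_eq_coe_finsetCard, hcard]; exact_mod_cast min_le_right _ _)
  exact ⟨f, hinj, hmaps⟩

theorem Finset.exists_injOn_fiberwise {α K : Type*} [Fintype α] [DecidableEq K]
    (κ₁ κ₂ : α → K) (K₀ : Finset K) :
    ∃ (S : Finset α) (g : α → α), Set.InjOn g S ∧ (∀ a ∈ S, κ₂ (g a) = κ₁ a) ∧
      ∑ k ∈ K₀, min #{a | κ₁ a = k} #{a | κ₂ a = k} ≤ #S := by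
  classical
  choose s hs hcard f hf hmaps using
    fun k => exists_subset_injOn_mapsTo {a | κ₁ a = k} {a | κ₂ a = k}
  have hκ₁ {k a} (ha : a ∈ s k) : κ₁ a = k := (mem_filter.1 (hs k ha)).2
  have hκ₂ {k a} (ha : a ∈ s k) : κ₂ (f k a) = k := (mem_filter.1 (hmaps k ha)).2
  have hdisj : (K₀ : Set K).PairwiseDisjoint s := fun k _ k' _ hkk' =>
    disjoint_left.2 fun a ha ha' => hkk' ((hκ₁ ha).symm.trans (hκ₁ ha'))
  refine ⟨K₀.biUnion s, fun a => f (κ₁ a) a, ?_, ?_, ?_⟩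
  · intro a ha a' ha' heq
    obtain ⟨k, -, hak⟩ := mem_biUnion.1 ha
    obtain ⟨k', -, hak'⟩ := mem_biUnion.1 ha'
    have hkk' : k = k' := by
      rw [← hκ₂ hak, ← hκ₂ hak', ← hκ₁ hak, ← hκ₁ hak']; exact congrArg κ₂ heq
    subst hkk'
    simp only [hκ₁ hak, hκ₁ hak'] at heq
    exact hf k hak hak' heq
  · intro a ha
    obtain ⟨k, -, hak⟩ := mem_biUnion.1 ha
    simp only [hκ₁ hak, hκ₂ hak]
  · rw [card_biUnion hdisj, ← sum_congr rfl fun k _ => hcard k]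

section Substitute

variable {ι α : Type*} [Fintype ι] [DecidableEq α] {x y : α}

def substitute (x y : α) (a : ι → α) : ι → α := fun i => if a i = x then y else a i

theorem sum_comp_add_nsmul_eq_sum_comp_substitute {M : Type*} [AddCommMonoid M] (f : α → M)
    (a : ι → α) :
    ∑ i, f (a i) + #{i | a i = x} • f y
      = ∑ i, f (substitute x y a i) + #{i | a i = x} • f x := by
  have hterm (i : ι) : f (a i) + (if a i = x then f y else 0)
      = f (substitute x y a i) + (if a i = x then f x else 0) := by
    unfold substitute; split_ifs with h <;> simp [h, add_comm]
  simpa only [sum_add_distrib, ← sum_filter, sum_const] using sum_congr rfl fun i _ => hterm i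

theorem sum_comp_eq_of_substitute_eq {M : Type*} [AddCommGroup M] (f : α → M) {a a' : ι → α}
    (hsub : substitute x y a' = substitute x y a)
    (hcount : #{i | a' i = x} + 1 = #{i | a i = x}) :
    ∑ i, f (a' i) = (f y - f x) + ∑ i, f (a i) := by
  have h := sum_comp_add_nsmul_eq_sum_comp_substitute (x := x) (y := y) f a
  have h' := sum_comp_add_nsmul_eq_sum_comp_substitute (x := x) (y := y) f a'
  rw [hsub] at h'
  rw [← hcount, succ_nsmul, succ_nsmul] at h
  linear_combination (norm := abel) h' - h

variable [Fintype α] [DecidableEq ι]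

theorem card_substitute_fiber {b : ι → α} (hb : ∀ i, b i ≠ x) (m : ℕ) :
    #{a | substitute x y a = b ∧ #{i | a i = x} = m} = (#{i | b i = y}).choose m := by
  set fill : Finset ι → ι → α := fun E i => if i ∈ E then x else b i
  have hfill_pos (E : Finset ι) : ({i | fill E i = x} : Finset ι) = E := by
    ext i; by_cases hi : i ∈ E <;> simp [fill, hi, hb i]
  have hsubstitute_fill {E : Finset ι} (hE : E ⊆ ({i | b i = y} : Finset ι)) :
      substitute x y (fill E) = b := by
    ext i; by_cases hi : i ∈ E
    · simpa [substitute, fill, hi, eq_comm] using hE hi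
    · simp [substitute, fill, hi, hb i]
  have hfill_substitute {a : ι → α} (ha : substitute x y a = b) : fill {i | a i = x} = a := by
    ext i; by_cases hi : a i = x <;> simp [← ha, substitute, fill, hi]
  have hpos_subset {a : ι → α} (ha : substitute x y a = b) :
      ({i | a i = x} : Finset ι) ⊆ ({i | b i = y} : Finset ι) := by
    intro i; simp +contextual [← ha, substitute]
  rw [← card_powersetCard]
  refine card_nbij' (fun a => ({i | a i = x} : Finset ι)) fill ?_ ?_ ?_ fun E _ => hfill_pos E
  · intro a ha
    simp only [mem_coe, mem_filter, mem_univ, true_and, mem_powersetCard] at ha ⊢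
    exact ⟨hpos_subset ha.1, ha.2⟩
  · intro E hE
    simp only [mem_coe, mem_filter, mem_univ, true_and, mem_powersetCard] at hE ⊢
    exact ⟨hsubstitute_fill hE.1, by rw [hfill_pos, hE.2]⟩
  · intro a ha
    simp only [mem_coe, mem_filter, mem_univ, true_and] at ha
    exact hfill_substitute ha.1

theorem sum_pow_card_filter_eq {R : Type*} [CommRing R] (hxy : x ≠ y) (r : R) :
    ∑ b ∈ piFinset (fun _ : ι => ({x}ᶜ : Finset α)), r ^ #{i | b i = y}
      = ((Fintype.card α : R) - 2 + r) ^ Fintype.card ι := by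
  have hpow (b : ι → α) : r ^ #{i | b i = y} = ∏ i, if b i = y then r else 1 := by
    rw [prod_ite, prod_const, prod_const_one, mul_one]
  have hite (c : α) : (if c = y then r else 1) = 1 + if c = y then r - 1 else 0 := by
    split_ifs <;> ring
  simp_rw [hpow]
  rw [sum_prod_piFinset _ fun _ c => if c = y then r else 1, prod_const, card_univ]
  simp_rw [hite]
  rw [sum_add_distrib, sum_const, sum_ite_eq', if_pos (by simpa using hxy.symm), card_compl,
    card_singleton, nsmul_one, Nat.cast_sub (Fintype.card_pos_iff.2 ⟨x⟩)]
  push_cast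
  ring

theorem exists_injOn_substitute_shift :
    ∃ (S : Finset (ι → α)) (g : (ι → α) → ι → α), Set.InjOn g S ∧
      (∀ a ∈ S, substitute x y (g a) = substitute x y a ∧
        #{i | g a i = x} + 1 = #{i | a i = x}) ∧
      ∑ b ∈ piFinset (fun _ : ι => ({x}ᶜ : Finset α)), 2 ^ #{i | b i = y} ≤
        #S + ∑ b ∈ piFinset (fun _ : ι => ({x}ᶜ : Finset α)),
          (#{i | b i = y}).choose (#{i | b i = y} / 2) := by
  obtain ⟨S, g, hinj, hkey, hcard⟩ := exists_injOn_fiberwise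
    (fun a => (substitute x y a, #{i | a i = x}))
    (fun a => (substitute x y a, #{i | a i = x} + 1))
    (piFinset (fun _ : ι => ({x}ᶜ : Finset α)) ×ˢ range (Fintype.card ι + 1))
  refine ⟨S, g, hinj, fun a ha => Prod.mk.inj (hkey a ha), ?_⟩
  have hfiber (b : ι → α) (hb : b ∈ piFinset (fun _ : ι => ({x}ᶜ : Finset α))) :
      2 ^ #{i | b i = y} ≤ ∑ m ∈ range (Fintype.card ι + 1),
        min #{a | (substitute x y a, #{i | a i = x}) = (b, m)}
          #{a | (substitute x y a, #{i | a i = x} + 1) = (b, m)} +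
        (#{i | b i = y}).choose (#{i | b i = y} / 2) := by
    have hb' : ∀ i, b i ≠ x := by simpa using hb
    simp only [sum_range_succ', Prod.mk.injEq, Nat.add_right_cancel_iff,
      card_substitute_fiber hb', Nat.add_one_ne_zero, and_false, filter_false, card_empty,
      _root_.min_zero, add_zero]
    exact Nat.two_pow_le_sum_range_min_choose_add (card_le_univ _)
  calc _ ≤ _ := sum_le_sum hfiber
    _ ≤ _ := by rw [sum_add_distrib, ← sum_product']; exact Nat.add_le_add_right hcard _

end Substitute

/-- **Lemma 2.** Let `D` be a finite set of `k ≥ 2` reals, and let `d₁ ≠ d₂` be two of its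
elements. For every `ε > 0` there is `N₀` such that for all `N ≥ N₀` there exist a set `S`
of `N`-tuples from `D` with `#S ≥ (1 - ε) k^N` and a map `g` of `N`-tuples, injective on `S`,
which raises the coordinate sum by exactly `d₂ - d₁`. -/
theorem shift_bijection_on_large_subset
    (D : Finset ℝ) (hD : 2 ≤ D.card) (d₁ d₂ : ℝ) (h₁ : d₁ ∈ D) (h₂ : d₂ ∈ D) (hne : d₁ ≠ d₂) :
    ∀ ε : ℝ, 0 < ε → ∃ N₀ : ℕ, ∀ N : ℕ, N₀ ≤ N →
      ∃ (S : Finset (Fin N → D)) (g : (Fin N → D) → (Fin N → D)),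
        (1 - ε) * (D.card : ℝ) ^ N ≤ (S.card : ℝ) ∧
        Set.InjOn g ↑S ∧
        ∀ a ∈ S, ∑ n : Fin N, (g a n : ℝ) = (d₂ - d₁) + ∑ n : Fin N, (a n : ℝ) := by
  intro ε hε
  obtain ⟨C, hC⟩ := Nat.exists_choose_half_le (half_pos hε)
  have hk : (2 : ℝ) ≤ D.card := by exact_mod_cast hD
  obtain ⟨N₀, hN₀⟩ := eventually_atTop.1 <| eventually_mul_pow_le_mul_pow (c := C)
    (by linarith : (0 : ℝ) ≤ D.card - 2 + 1 / 2) (by linarith : _ < (D.card : ℝ)) (half_pos hε)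
  refine ⟨N₀, fun N hN => ?_⟩
  let x : D := ⟨d₁, h₁⟩
  let y : D := ⟨d₂, h₂⟩
  have hxy : x ≠ y := by simpa [x, y] using hne
  obtain ⟨S, g, hinj, hkey, hcard⟩ := exists_injOn_substitute_shift (ι := Fin N) (x := x) (y := y)
  refine ⟨S, g, ?_, hinj, fun a ha =>
    sum_comp_eq_of_substitute_eq Subtype.val (hkey a ha).1 (hkey a ha).2⟩
  have htotal := sum_pow_card_filter_eq (ι := Fin N) hxy (2 : ℝ)
  have htail := sum_pow_card_filter_eq (ι := Fin N) hxy (1 / 2 : ℝ)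
  rw [Fintype.card_coe, Fintype.card_fin] at htotal htail
  rw [sub_add_cancel] at htotal
  have hbad := sum_le_sum fun b (_ : b ∈ piFinset fun _ : Fin N => {x}ᶜ) => hC #{i | b i = y}
  rw [sum_add_distrib, ← mul_sum, ← mul_sum, htotal, htail] at hbad
  have hcard' := (Nat.cast_le (α := ℝ)).2 hcard
  push_cast at hcard'
  rw [htotal] at hcard'
  linarith [hN₀ N hN]
end

section
/- Let D be a finite set of real numbers with at least two elements such that Σ_{d∈D} d > 0, and let ℙ be the product probability measure on Ω = D^ℕ (each coordinate uniform on D). Then there exists K ∈ ℝ such that ℙ({(aₙ) ∈ Ω : Σ_{n=1}^∞ aₙ xⁿ > K for every x ∈ (0,1)}) > 0. -/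
open MeasureTheory ProbabilityTheory Filter Topology Set ENNReal

/-!
By the strong law of large numbers the partial sums `Sₘ = a₀ + ⋯ + aₘ₋₁` of a random sequence
tend to `+∞` almost surely, because the common mean `(∑ d) / #D` is positive. Abel summation
writes `∑ aₙ xⁿ⁺¹ = (1 - x) ∑ Sₘ xᵐ`; once `Sₘ ≥ 0` for `m ≥ N`, this is bounded below on `(0,1)`
by `∑_{m<N} min(Sₘ, 0)`. So almost surely some `-j` with `j ∈ ℕ` is a uniform lower bound, and
one of these countably many events has positive probability.
-/

open Finset in
theorem tsum_mul_pow_succ_eq_one_sub_mul_tsum {R : Type*} [CommRing R] [TopologicalSpace R]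
    [IsTopologicalRing R] [T2Space R] (a : ℕ → R) (x : R)
    (hS : Summable fun m => (∑ i ∈ range m, a i) * x ^ m) :
    ∑' n, a n * x ^ (n + 1) = (1 - x) * ∑' m, (∑ i ∈ range m, a i) * x ^ m := by
  set S : ℕ → R := fun m => ∑ i ∈ range m, a i
  have hshift : ∑' n, S (n + 1) * x ^ (n + 1) = ∑' m, S m * x ^ m := by
    rw [hS.tsum_eq_zero_add]; simp [S]
  calc ∑' n, a n * x ^ (n + 1)
      = ∑' n, (S (n + 1) * x ^ (n + 1) - x * (S n * x ^ n)) := by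
        congr 1; ext n; simp only [S, sum_range_succ]; ring
    _ = ∑' n, S (n + 1) * x ^ (n + 1) - ∑' n, x * (S n * x ^ n) :=
        ((summable_nat_add_iff 1).2 hS).tsum_sub (hS.mul_left x)
    _ = (1 - x) * ∑' m, S m * x ^ m := by rw [hshift, hS.tsum_mul_left]; ring

open Finset in
theorem summable_partialSum_mul_pow {a : ℕ → ℝ} {M : ℝ} (hM : ∀ n, |a n| ≤ M) {x : ℝ}
    (hx : |x| < 1) : Summable fun m => (∑ i ∈ range m, a i) * x ^ m := by
  refine .of_norm_bounded (g := fun m => M * (m * |x| ^ m)) ?_ fun m => ?_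
  · have := summable_pow_mul_geometric_of_norm_lt_one 1 (r := |x|) (by simpa using hx)
    simpa using this.mul_left M
  · calc ‖(∑ i ∈ range m, a i) * x ^ m‖ ≤ (∑ i ∈ range m, |a i|) * |x| ^ m := by
          rw [norm_mul, norm_pow, Real.norm_eq_abs, Real.norm_eq_abs]
          gcongr; exact abs_sum_le_sum_abs _ _
      _ ≤ (∑ i ∈ range m, M) * |x| ^ m := by gcongr; exact hM _
      _ = M * (m * |x| ^ m) := by simp; ring

theorem sum_range_min_zero_le_tsum_mul_pow {S : ℕ → ℝ} {N : ℕ} (hN : ∀ m ≥ N, 0 ≤ S m)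
    {x : ℝ} (hx : x ∈ Ioo 0 1) (hS : Summable fun m => S m * x ^ m) :
    ∑ m ∈ Finset.range N, min (S m) 0 ≤ ∑' m, S m * x ^ m := by
  rw [← hS.sum_add_tsum_nat_add N]
  have hhead : ∀ m, min (S m) 0 ≤ S m * x ^ m := fun m => by
    have hxm : x ^ m ∈ Ioc 0 1 := ⟨pow_pos hx.1 m, pow_le_one₀ hx.1.le hx.2.le⟩
    rcases le_total 0 (S m) with h | h
    · exact (min_le_right _ _).trans (mul_nonneg h hxm.1.le)
    · exact (min_le_left _ _).trans (by nlinarith [hxm.1, hxm.2])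
  have htail : 0 ≤ ∑' m, S (m + N) * x ^ (m + N) :=
    tsum_nonneg fun m => mul_nonneg (hN _ (Nat.le_add_left N m)) (pow_pos hx.1 _).le
  linarith [Finset.sum_le_sum fun m (_ : m ∈ Finset.range N) => hhead m]

open Finset in
theorem exists_lt_tsum_mul_pow_of_tendsto_partialSum {a : ℕ → ℝ} {M : ℝ} (hM : ∀ n, |a n| ≤ M)
    (h : Tendsto (fun m => ∑ i ∈ range m, a i) atTop atTop) :
    ∃ K, ∀ x ∈ Ioo (0 : ℝ) 1, K < ∑' n, a n * x ^ (n + 1) := by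
  obtain ⟨N, hN⟩ := (h.eventually_ge_atTop 0).exists_forall_of_atTop
  set L := ∑ m ∈ range N, min (∑ i ∈ range m, a i) 0
  have hL : L ≤ 0 := sum_nonpos fun m _ => min_le_right _ _
  refine ⟨L - 1, fun x hx => ?_⟩
  have hS := summable_partialSum_mul_pow hM (abs_lt.2 ⟨by linarith [hx.1], hx.2⟩)
  rw [tsum_mul_pow_succ_eq_one_sub_mul_tsum a x hS]
  have := sum_range_min_zero_le_tsum_mul_pow hN hx hS
  nlinarith [hx.1, hx.2]

section UniformOnFinset

variable {Ω : Type*} [MeasurableSpace Ω] {P : Measure Ω} {X : Ω → ℝ} {D : Finset ℝ} {c : ℝ≥0∞}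

theorem ae_mem_of_map_eq_smul_sum_dirac (hX : Measurable X)
    (h : P.map X = c • ∑ d ∈ D, Measure.dirac d) : ∀ᵐ ω ∂P, X ω ∈ D := by
  refine (ae_map_iff hX.aemeasurable (p := (· ∈ D)) D.finite_toSet.measurableSet).1 ?_
  rw [h, ae_iff]
  simp

theorem integral_eq_of_map_eq_smul_sum_dirac (hX : Measurable X)
    (h : P.map X = c • ∑ d ∈ D, Measure.dirac d) : P[X] = c.toReal * ∑ d ∈ D, d := by
  calc P[X] = ∫ y, y ∂(P.map X) := (integral_map hX.aemeasurable aestronglyMeasurable_id).symm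
    _ = c.toReal * ∑ d ∈ D, d := by
      rw [h, integral_smul_measure,
        integral_finsetSum_measure fun d _ => integrable_dirac enorm_lt_top]
      simp

end UniformOnFinset

theorem ae_tendsto_sum_range_atTop {Ω : Type*} {m : MeasurableSpace Ω} {μ : Measure Ω}
    (X : ℕ → Ω → ℝ) (hint : Integrable (X 0) μ)
    (hindep : Pairwise fun i j => IndepFun (X i) (X j) μ)
    (hident : ∀ i, IdentDistrib (X i) (X 0) μ μ) (hpos : 0 < μ[X 0]) :
    ∀ᵐ ω ∂μ, Tendsto (fun n : ℕ => ∑ i ∈ Finset.range n, X i ω) atTop atTop := by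
  filter_upwards [strong_law_ae_real X hint hindep hident] with ω hω
  refine (Tendsto.pos_mul_atTop hpos hω tendsto_natCast_atTop_atTop).congr' ?_
  filter_upwards [eventually_ne_atTop 0] with n hn
  field_simp

theorem exists_measure_setOf_pos_of_ae_exists {α ι : Type*} [MeasurableSpace α] [Countable ι]
    {μ : Measure α} [NeZero μ] {p : ι → α → Prop} (h : ∀ᵐ a ∂μ, ∃ i, p i a) :
    ∃ i, 0 < μ {a | p i a} := by
  refine exists_measure_pos_of_not_measure_iUnion_null fun h0 => ?_
  obtain ⟨a, ha, hn⟩ := (h.and (measure_eq_zero_iff_ae_notMem.1 h0)).exists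
  exact hn (mem_iUnion.2 ha)

theorem positive_probability_uniform_lower_bound_general
(D : Finset ℝ)
    (P : Measure (ℕ → ℝ)) [IsProbabilityMeasure P]
    (hindep : iIndepFun (fun n (a : ℕ → ℝ) => a n) P)
    (hunif : ∀ n : ℕ,
      P.map (fun a => a n) = (D.card : ℝ≥0∞)⁻¹ • ∑ d ∈ D, Measure.dirac d)
    (hsum : 0 < ∑ d ∈ D, d) :
    ∃ K : ℝ, 0 < P {a : ℕ → ℝ |
      ∀ x ∈ Set.Ioo (0 : ℝ) 1, K < ∑' n : ℕ, a n * x ^ (n + 1)} := by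
  have hcoord (n : ℕ) : Measurable fun a : ℕ → ℝ => a n := measurable_pi_apply n
  have hbound : ∀ᵐ a ∂P, ∀ n, |a n| ≤ ∑ d ∈ D, |d| := by
    filter_upwards [ae_all_iff.2 fun n => ae_mem_of_map_eq_smul_sum_dirac (hcoord n) (hunif n)]
      with a ha n
    exact Finset.single_le_sum (f := fun d => |d|) (fun d _ => abs_nonneg d) (ha n)
  have hint : Integrable (fun a : ℕ → ℝ => a 0) P :=
    .of_bound (hcoord 0).aestronglyMeasurable _ (hbound.mono fun a ha => ha 0)
  have hmean : 0 < P[fun a : ℕ → ℝ => a 0] := by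
    have : D.Nonempty := Finset.nonempty_of_sum_ne_zero hsum.ne'
    rw [integral_eq_of_map_eq_smul_sum_dirac (hcoord 0) (hunif 0), toReal_inv, toReal_natCast]
    positivity
  have htend := ae_tendsto_sum_range_atTop _ hint (fun i j hij => hindep.indepFun hij)
    (fun i => ⟨(hcoord i).aemeasurable, (hcoord 0).aemeasurable, by rw [hunif i, hunif 0]⟩) hmean
  have hnat : ∀ᵐ a ∂P, ∃ j : ℕ, ∀ x ∈ Ioo (0 : ℝ) 1, -(j : ℝ) < ∑' n, a n * x ^ (n + 1) := by
    filter_upwards [hbound, htend] with a ha hta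
    obtain ⟨K, hK⟩ := exists_lt_tsum_mul_pow_of_tendsto_partialSum ha hta
    obtain ⟨j, hj⟩ := exists_nat_ge (-K)
    exact ⟨j, fun x hx => by linarith [hK x hx]⟩
  obtain ⟨j, hj⟩ := exists_measure_setOf_pos_of_ae_exists hnat
  exact ⟨-j, hj⟩

/-- **Lemma 4.** If the elements of `D` have positive sum, then there is a real `K` such that
with positive probability `∑ aₙ xⁿ > K` holds for every `x ∈ (0,1)`. -/
theorem positive_probability_uniform_lower_bound
(D : Finset ℝ) (hD : 2 ≤ D.card)
    (P : Measure (ℕ → ℝ)) [IsProbabilityMeasure P]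
    (hindep : iIndepFun (fun n (a : ℕ → ℝ) => a n) P)
    (hunif : ∀ n : ℕ,
      P.map (fun a => a n) = (D.card : ℝ≥0∞)⁻¹ • ∑ d ∈ D, Measure.dirac d)
    (hsum : 0 < ∑ d ∈ D, d) :
    ∃ K : ℝ, 0 < P {a : ℕ → ℝ |
      ∀ x ∈ Set.Ioo (0 : ℝ) 1, K < ∑' n : ℕ, a n * x ^ (n + 1)} :=
  positive_probability_uniform_lower_bound_general D P hindep hunif hsum
end

section
/- Let D = {d₁, …, d_k} be a finite set of k ≥ 2 distinct real numbers with Σ_{j=1}^k d_j = 0, and let ℙ be the product probability measure on Ω = D^ℕ (each coordinate uniform on D). Then ℙ({(aₙ) : lim_{x→1⁻} Σ_{n=1}^∞ aₙ xⁿ = +∞}) ≤ 1 − 1/k and ℙ({(aₙ) : lim_{x→1⁻} Σ_{n=1}^∞ aₙ xⁿ = −∞}) ≤ 1 − 1/k. -/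
/-! Let `σ` be a cyclic permutation of `D`. Applying `σ` to every coordinate preserves the
i.i.d. uniform law `P`, so each of the `k` sequences `σʲ ∘ a` (`0 ≤ j < k`) has the law of `a`.
Since every orbit of `σ` is all of `D`, these `k` sequences add up to `∑ d ∈ D, d = 0`, and so do
their power series: they cannot all tend to `+∞` (or all to `-∞`) as `x → 1⁻`. Hence almost
every `a` has some `j < k` with `σʲ ∘ a` outside the divergence event `E`, and
`1 ≤ ∑ⱼ P (σʲ ∘ a ∉ E) = k (1 - P E)`.
That `E` is measurable up to a null set follows from the continuity of the sum on `(-1, 1)` for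
bounded coefficients, which lets `x` range over the rationals only. -/

open MeasureTheory ProbabilityTheory Filter Topology Set ENNReal

theorem Equiv.Perm.IsCycleOn.sum_range_card_pow_apply {α M : Type*} [AddCommMonoid M]
    {σ : Equiv.Perm α} {s : Finset α} (hσ : σ.IsCycleOn s) {a : α} (ha : a ∈ s) (f : α → M) :
    ∑ j ∈ Finset.range s.card, f ((σ ^ j) a) = ∑ x ∈ s, f x := by
  refine Finset.sum_nbij (fun j => (σ ^ j) a) (fun j _ => hσ.1.mapsTo.perm_pow j ha)
    (fun i hi j hj hij => ?_) (fun x hx => ?_) (fun _ _ => rfl)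
  · exact ((hσ.pow_apply_eq_pow_apply ha).1 hij).eq_of_lt_of_lt
      (Finset.mem_range.1 hi) (Finset.mem_range.1 hj)
  · obtain ⟨j, hj, rfl⟩ := hσ.exists_pow_eq ha hx
    exact ⟨j, Finset.mem_range.2 hj, rfl⟩

theorem measurable_of_countable_setOf_ne {α : Type*} [MeasurableSpace α]
    [MeasurableSingletonClass α] {f : α → α} (hf : {x | f x ≠ x}.Countable) : Measurable f := by
  have := hf.to_subtype
  refine measurable_of_restrict_of_restrict_compl hf.measurableSet (measurable_of_countable _) ?_
  convert measurable_subtype_coe (p := (· ∈ {x | f x ≠ x}ᶜ)) using 1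
  ext x
  exact not_not.1 x.2

theorem measurePreserving_smul_sum_dirac {α : Type*} [MeasurableSpace α]
    [MeasurableSingletonClass α] (c : ℝ≥0∞) {s : Finset α} {σ : Equiv.Perm α}
    (hσ : {x | σ x ≠ x} ⊆ s) :
    MeasurePreserving σ (c • ∑ d ∈ s, Measure.dirac d) (c • ∑ d ∈ s, Measure.dirac d) := by
  have hm : Measurable σ := measurable_of_countable_setOf_ne (s.countable_toSet.mono hσ)
  refine ⟨hm, ?_⟩
  rw [Measure.map_smul, Measure.map_finset_sum hm.aemeasurable]
  simp_rw [Measure.map_dirac]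
  rw [σ.sum_comp s Measure.dirac hσ]

theorem measurePreserving_map_of_iIndepFun {ι β : Type*} [MeasurableSpace β]
    {P : Measure (ι → β)} [IsProbabilityMeasure P] {μ : Measure β}
    (hindep : iIndepFun (fun i (a : ι → β) => a i) P) (hlaw : ∀ i, P.map (fun a => a i) = μ)
    {τ : β → β} (hτ : MeasurePreserving τ μ μ) :
    MeasurePreserving (fun a i => τ (a i)) P P := by
  have hμ (i : ι) : IsProbabilityMeasure μ :=
    hlaw i ▸ Measure.isProbabilityMeasure_map (measurable_pi_apply i).aemeasurable
  have hP : P = Measure.infinitePi (fun _ => μ) := by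
    simpa [hlaw] using hindep.map_fun_eq_infinitePi_map measurable_pi_apply
  subst hP
  refine ⟨measurable_pi_lambda _ fun i => hτ.measurable.comp (measurable_pi_apply i), ?_⟩
  rw [Measure.infinitePi_map_pi (hμ := hμ) _ fun _ => hτ.measurable, hτ.map_eq]

theorem ENNReal.le_one_sub_inv_of_one_le_mul_one_sub {k : ℕ} {p : ℝ≥0∞} (hp : p ≤ 1)
    (h : 1 ≤ k * (1 - p)) : p ≤ 1 - 1 / k := by
  have hk : (k : ℝ≥0∞) ≠ 0 := by rintro hk; simp [hk] at h
  have h1 : 1 / (k : ℝ≥0∞) ≤ 1 - p := by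
    rwa [ENNReal.div_le_iff hk (natCast_ne_top k), mul_comm]
  calc p = 1 - (1 - p) := (ENNReal.sub_sub_cancel one_ne_top hp).symm
    _ ≤ 1 - 1 / k := tsub_le_tsub_left h1 1

theorem measure_le_one_sub_inv_of_ae_exists_notMem {Ω : Type*} [MeasurableSpace Ω]
    {P : Measure Ω} [IsProbabilityMeasure P] {k : ℕ} {Φ : ℕ → Ω → Ω}
    (hΦ : ∀ j, MeasurePreserving (Φ j) P P) {E : Set Ω} (hE : NullMeasurableSet E P)
    (hcover : ∀ᵐ ω ∂P, ∃ j < k, Φ j ω ∉ E) : P E ≤ 1 - 1 / k := by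
  refine ENNReal.le_one_sub_inv_of_one_le_mul_one_sub prob_le_one ?_
  calc 1 = P univ := measure_univ.symm
    _ ≤ P (⋃ j ∈ Finset.range k, Φ j ⁻¹' Eᶜ) :=
        measure_mono_ae <| hcover.mono fun ω ⟨j, hj, hjE⟩ _ =>
          mem_iUnion₂.2 ⟨j, Finset.mem_range.2 hj, hjE⟩
    _ ≤ ∑ j ∈ Finset.range k, P (Φ j ⁻¹' Eᶜ) := measure_biUnion_finset_le _ _
    _ = k * (1 - P E) := by
        simp only [(hΦ _).measure_preimage hE.compl, prob_compl_eq_one_sub₀ hE,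
          Finset.sum_const, Finset.card_range, nsmul_eq_mul]

theorem tendsto_nhdsLT_atTop_iff_forall_rat {f : ℝ → ℝ} {b c : ℝ} (hcb : c < b)
    (hf : ContinuousOn f (Ioo c b)) :
    Tendsto f (𝓝[<] b) atTop ↔
      ∀ M : ℕ, ∃ r : ℚ, (r : ℝ) < b ∧ ∀ q : ℚ, (q : ℝ) ∈ Ioo (r : ℝ) b → (M : ℝ) ≤ f q := by
  constructor
  · intro h M
    obtain ⟨l, hl, hsub⟩ := mem_nhdsLT_iff_exists_Ioo_subset.1 (h.eventually_ge_atTop (M : ℝ))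
    obtain ⟨r, hlr, hrb⟩ := exists_rat_btwn (show l < b from hl)
    exact ⟨r, hrb, fun q hq => hsub ⟨hlr.trans hq.1, hq.2⟩⟩
  · intro h
    refine tendsto_atTop.2 fun y => ?_
    obtain ⟨M, hyM⟩ := exists_nat_ge y
    obtain ⟨r, hrb, hr⟩ := h M
    have hU : Ioo (max (r : ℝ) c) b ⊆ Ioo c b := Ioo_subset_Ioo_left (le_max_right _ _)
    filter_upwards [Ioo_mem_nhdsLT (max_lt hrb hcb)] with x hx
    -- `M ≤ f` on the rationals of `Ioo (max r c) b`, hence on their closure by continuity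
    have hx_cl := Rat.denseRange_cast.open_subset_closure_inter isOpen_Ioo hx
    refine hyM.trans (continuousWithinAt_const.closure_le hx_cl
      ((hf x (hU hx)).mono (inter_subset_left.trans hU)) ?_)
    rintro _ ⟨hqU, q, rfl⟩
    exact hr q ⟨(le_max_left _ _).trans_lt hqU.1, hqU.2⟩

noncomputable def powSeriesSum (a : ℕ → ℝ) (x : ℝ) : ℝ := ∑' n, a n * x ^ (n + 1)

section PowSeriesSum

variable {a : ℕ → ℝ} {C : ℝ}

theorem abs_mul_pow_succ_le (ha : ∀ n, |a n| ≤ C) (n : ℕ) {x r : ℝ} (hxr : |x| ≤ r)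
    (hr : r ≤ 1) : |a n * x ^ (n + 1)| ≤ C * r ^ n := by
  have hr0 : 0 ≤ r := (abs_nonneg x).trans hxr
  rw [abs_mul, abs_pow]
  calc |a n| * |x| ^ (n + 1) ≤ C * r ^ (n + 1) :=
        mul_le_mul (ha n) (pow_le_pow_left₀ (abs_nonneg x) hxr _) (by positivity)
          ((abs_nonneg _).trans (ha n))
    _ ≤ C * r ^ n := mul_le_mul_of_nonneg_left (pow_le_pow_of_le_one hr0 hr n.le_succ)
          ((abs_nonneg _).trans (ha n))

theorem summable_mul_pow_succ (ha : ∀ n, |a n| ≤ C) {x : ℝ} (hx : |x| < 1) :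
    Summable fun n => a n * x ^ (n + 1) :=
  .of_norm_bounded ((summable_geometric_of_lt_one (abs_nonneg x) hx).mul_left C)
    fun n => abs_mul_pow_succ_le ha n le_rfl hx.le

theorem continuousOn_powSeriesSum (ha : ∀ n, |a n| ≤ C) :
    ContinuousOn (powSeriesSum a) (Ioo (-1) 1) := by
  intro x hx
  have hx' : |x| < 1 := abs_lt.2 hx
  set r := (|x| + 1) / 2
  have hr0 : 0 ≤ r := by positivity
  have hr1 : r < 1 := by simp only [r]; linarith
  have hxr : |x| < r := by simp only [r]; linarith
  have hcont : ContinuousOn (powSeriesSum a) (Icc (-r) r) :=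
    continuousOn_tsum (fun n => (continuous_const.mul (continuous_pow _)).continuousOn)
      ((summable_geometric_of_lt_one hr0 hr1).mul_left C)
      fun n y hy => abs_mul_pow_succ_le ha n (abs_le.2 hy) hr1.le
  obtain ⟨hxl, hxu⟩ := abs_lt.1 hxr
  exact (hcont.continuousAt (_root_.Icc_mem_nhds hxl hxu)).continuousWithinAt

theorem powSeriesSum_neg (a : ℕ → ℝ) (x : ℝ) : powSeriesSum (-a) x = -powSeriesSum a x := by
  simp [powSeriesSum, neg_mul, tsum_neg]

theorem sum_powSeriesSum {k : ℕ} {b : ℕ → ℕ → ℝ} (hb : ∀ j n, |b j n| ≤ C) {x : ℝ}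
    (hx : |x| < 1) :
    ∑ j ∈ Finset.range k, powSeriesSum (b j) x = powSeriesSum (∑ j ∈ Finset.range k, b j) x := by
  simp only [powSeriesSum, Finset.sum_apply, Finset.sum_mul]
  exact (Summable.tsum_finsetSum fun j _ => summable_mul_pow_succ (hb j) hx).symm

theorem measurable_powSeriesSum_apply (x : ℝ) : Measurable fun a => powSeriesSum a x :=
  Measurable.tsum fun n => (measurable_pi_apply n).mul_const _

theorem not_forall_tendsto_powSeriesSum_atTop {k : ℕ} (hk : 0 < k) {b : ℕ → ℕ → ℝ}
    (hb : ∀ j n, |b j n| ≤ C) (hsum : ∑ j ∈ Finset.range k, b j = 0) :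
    ¬ ∀ j < k, Tendsto (powSeriesSum (b j)) (𝓝[<] 1) atTop := by
  intro h
  have hpos : ∀ᶠ x in 𝓝[<] (1 : ℝ), ∀ j ∈ Finset.range k, 0 < powSeriesSum (b j) x :=
    (Finset.eventually_all _).2 fun j hj => (h j (Finset.mem_range.1 hj)).eventually_gt_atTop 0
  have hIoo : ∀ᶠ x in 𝓝[<] (1 : ℝ), x ∈ Ioo (-1) 1 := Ioo_mem_nhdsLT (by norm_num)
  obtain ⟨x, hx, hxpos⟩ := (hIoo.and hpos).exists
  have := Finset.sum_pos hxpos (Finset.nonempty_range_iff.2 hk.ne')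
  rw [sum_powSeriesSum hb (abs_lt.2 hx), hsum] at this
  simp [powSeriesSum] at this

theorem not_forall_tendsto_powSeriesSum_atBot {k : ℕ} (hk : 0 < k) {b : ℕ → ℕ → ℝ}
    (hb : ∀ j n, |b j n| ≤ C) (hsum : ∑ j ∈ Finset.range k, b j = 0) :
    ¬ ∀ j < k, Tendsto (powSeriesSum (b j)) (𝓝[<] 1) atBot := by
  refine fun h => not_forall_tendsto_powSeriesSum_atTop hk (b := -b) (by simpa using hb)
    (by simp [Finset.sum_neg_distrib, hsum]) fun j hj => ?_
  rw [Pi.neg_apply, funext (powSeriesSum_neg (b j))]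
  exact tendsto_neg_atTop_iff.2 (h j hj)

end PowSeriesSum

theorem exists_measurableSet_tendsto_powSeriesSum_atTop :
    ∃ B : Set (ℕ → ℝ), MeasurableSet B ∧ ∀ (C : ℝ) (a : ℕ → ℝ), (∀ n, |a n| ≤ C) →
      (a ∈ B ↔ Tendsto (powSeriesSum a) (𝓝[<] 1) atTop) := by
  refine ⟨{a | ∀ M : ℕ, ∃ r : ℚ, (r : ℝ) < 1 ∧
    ∀ q : ℚ, (q : ℝ) ∈ Ioo (r : ℝ) 1 → (M : ℝ) ≤ powSeriesSum a q}, ?_, fun C a ha =>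
    (tendsto_nhdsLT_atTop_iff_forall_rat (by norm_num) (continuousOn_powSeriesSum ha)).symm⟩
  simp only [ofPred_forall, ofPred_exists, ofPred_and]
  exact .iInter fun M => .iUnion fun r => .inter (.const _) <| .iInter fun q => .iInter fun _ =>
    measurableSet_le measurable_const (measurable_powSeriesSum_apply q)

theorem exists_measurableSet_tendsto_powSeriesSum_atBot :
    ∃ B : Set (ℕ → ℝ), MeasurableSet B ∧ ∀ (C : ℝ) (a : ℕ → ℝ), (∀ n, |a n| ≤ C) →
      (a ∈ B ↔ Tendsto (powSeriesSum a) (𝓝[<] 1) atBot) := by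
  obtain ⟨B, hB, hBa⟩ := exists_measurableSet_tendsto_powSeriesSum_atTop
  refine ⟨Neg.neg ⁻¹' B, measurable_neg hB, fun C a ha => ?_⟩
  rw [mem_preimage, hBa C (-a) (by simpa using ha), funext (powSeriesSum_neg a)]
  exact tendsto_neg_atTop_iff

theorem measure_le_one_sub_inv_card_of_not_forall_mem {D : Finset ℝ} {P : Measure (ℕ → ℝ)}
    [IsProbabilityMeasure P] (hindep : iIndepFun (fun n (a : ℕ → ℝ) => a n) P)
    (hunif : ∀ n : ℕ, P.map (fun a => a n) = (D.card : ℝ≥0∞)⁻¹ • ∑ d ∈ D, Measure.dirac d)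
    (hsum : ∑ d ∈ D, d = 0) {E : Set (ℕ → ℝ)}
    (hE : ∃ B, MeasurableSet B ∧ ∀ a : ℕ → ℝ, (∀ n, a n ∈ D) → (a ∈ B ↔ a ∈ E))
    (hfamily : ∀ b : ℕ → ℕ → ℝ, (∀ j n, b j n ∈ D) → ∑ j ∈ Finset.range D.card, b j = 0 →
      ¬ ∀ j < D.card, b j ∈ E) :
    P E ≤ 1 - 1 / D.card := by
  obtain ⟨σ, hσ, hσD⟩ := D.countable_toSet.exists_cycleOn
  have hΦ (j : ℕ) : MeasurePreserving (fun a n => (σ ^ j) (a n)) P P :=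
    measurePreserving_map_of_iIndepFun hindep hunif <| by
      simpa only [Equiv.Perm.coe_pow] using (measurePreserving_smul_sum_dirac _ hσD).iterate j
  have hG : ∀ᵐ a ∂P, ∀ n, a n ∈ D := ae_all_iff.2 fun n =>
    ae_of_ae_map (measurable_pi_apply n).aemeasurable <| by
      rw [hunif n, ae_iff]
      simp
  obtain ⟨B, hB, hBE⟩ := hE
  have hEnull : NullMeasurableSet E P :=
    hB.nullMeasurableSet.congr (hG.mono fun a ha => propext (hBE a ha))
  refine measure_le_one_sub_inv_of_ae_exists_notMem hΦ hEnull (hG.mono fun a ha => ?_)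
  have hrot := hfamily (fun j n => (σ ^ j) (a n)) (fun j n => hσ.1.mapsTo.perm_pow j (ha n))
    (funext fun n => by
      simpa only [Finset.sum_apply, Pi.zero_apply, id] using
        (hσ.sum_range_card_pow_apply (ha n) id).trans hsum)
  simpa only [not_forall, exists_prop] using hrot

/-- If the elements of `D` (of cardinality `k ≥ 2`) sum to zero, then the probability that
`lim_{x→1⁻} ∑ aₙ xⁿ = +∞`, as well as the probability that `lim_{x→1⁻} ∑ aₙ xⁿ = -∞`,
is at most `1 - 1/k`. -/
theorem divergence_probability_le_one_sub_inv_card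
(D : Finset ℝ) (hD : 2 ≤ D.card)
    (P : Measure (ℕ → ℝ)) [IsProbabilityMeasure P]
    (hindep : iIndepFun (fun n (a : ℕ → ℝ) => a n) P)
    (hunif : ∀ n : ℕ,
      P.map (fun a => a n) = (D.card : ℝ≥0∞)⁻¹ • ∑ d ∈ D, Measure.dirac d)
    (hsum : ∑ d ∈ D, d = 0) :
    P {a : ℕ → ℝ |
        Tendsto (fun x : ℝ => ∑' n : ℕ, a n * x ^ (n + 1)) (𝓝[<] (1 : ℝ)) atTop}
      ≤ 1 - 1 / (D.card : ℝ≥0∞) ∧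
    P {a : ℕ → ℝ |
        Tendsto (fun x : ℝ => ∑' n : ℕ, a n * x ^ (n + 1)) (𝓝[<] (1 : ℝ)) atBot}
      ≤ 1 - 1 / (D.card : ℝ≥0∞) := by
  have hk : 0 < D.card := by omega
  have hbound {a : ℕ → ℝ} (ha : ∀ n, a n ∈ D) (n : ℕ) : |a n| ≤ ∑ d ∈ D, |d| :=
    Finset.single_le_sum (f := fun d => |d|) (fun d _ => abs_nonneg d) (ha n)
  obtain ⟨Btop, hBtop, hBtop_iff⟩ := exists_measurableSet_tendsto_powSeriesSum_atTop
  obtain ⟨Bbot, hBbot, hBbot_iff⟩ := exists_measurableSet_tendsto_powSeriesSum_atBot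
  exact ⟨measure_le_one_sub_inv_card_of_not_forall_mem hindep hunif hsum
      ⟨Btop, hBtop, fun a ha => hBtop_iff _ a (hbound ha)⟩
      fun b hb hb0 => not_forall_tendsto_powSeriesSum_atTop hk (fun j => hbound (hb j)) hb0,
    measure_le_one_sub_inv_card_of_not_forall_mem hindep hunif hsum
      ⟨Bbot, hBbot, fun a ha => hBbot_iff _ a (hbound ha)⟩
      fun b hb hb0 => not_forall_tendsto_powSeriesSum_atBot hk (fun j => hbound (hb j)) hb0⟩
end
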